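/- For all integers n ≥ 1 and r ≥ 1, La(n, ∨, ∧_r) = La(n, ∧, ∨_r) = C(C(n, ⌊n/2⌋), r): the maximum number of copies of ∧_r over all ∨-free families ℱ ⊆ 2^[n] (equivalently, of copies of ∨_r over all ∧-free families) equals the binomial coefficient C(M, r) with M = C(n, ⌊n/2⌋). -/

import Mathlib

open Classical Finset

noncomputable section

/-- `G` is a copy of the finite poset `α` among the subsets of `[n]`:
there is a bijection `φ` from `α` onto `G` such that `x ≤ y` implies `φ x ⊆ φ y`. -/
def IsCopy (α : Type) [PartialOrder α] [Fintype α] {n : ℕ}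
    (G : Finset (Finset (Fin n))) : Prop :=
  ∃ φ : α → Finset (Fin n), Function.Injective φ ∧
    Finset.image φ Finset.univ = G ∧ ∀ x y : α, x ≤ y → φ x ⊆ φ y

/-- `copyCount α F` is the number of copies of the poset `α` in the family `F`,
copies being counted as subfamilies of `F`. -/
def copyCount (α : Type) [PartialOrder α] [Fintype α] {n : ℕ}
    (F : Finset (Finset (Fin n))) : ℕ :=
  (F.powerset.filter fun G => IsCopy α G).card

/-- `La n P Q`: the maximum number of copies of `Q` in a `P`-free family of subsets of `[n]`. -/
def La (n : ℕ) (P Q : Type) [PartialOrder P] [Fintype P]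
    [PartialOrder Q] [Fintype Q] : ℕ :=
  ((Finset.univ : Finset (Finset (Finset (Fin n)))).filter fun F =>
    copyCount P F = 0).sup (copyCount Q)

/-- `La2 n P₁ P₂ Q`: the maximum number of copies of `Q` in a family of subsets of `[n]`
that is both `P₁`-free and `P₂`-free. -/
def La2 (n : ℕ) (P₁ P₂ Q : Type) [PartialOrder P₁] [Fintype P₁]
    [PartialOrder P₂] [Fintype P₂] [PartialOrder Q] [Fintype Q] : ℕ :=
  ((Finset.univ : Finset (Finset (Finset (Fin n)))).filter fun F =>
    copyCount P₁ F = 0 ∧ copyCount P₂ F = 0).sup (copyCount Q)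

/-- the full `k`-th level of `2^[n]`. -/
def level (n k : ℕ) : Finset (Finset (Fin n)) :=
  Finset.univ.filter fun A => A.card = k

/-- `γ^r_{i,j}(F)`: the number of `r`-element subfamilies of `F` whose intersection has
size `i` and whose union has size `j`. -/
def gammaCount (r n i j : ℕ) (F : Finset (Finset (Fin n))) : ℕ :=
  (F.powerset.filter fun G =>
    G.card = r ∧ (G.inf id).card = i ∧ (G.sup id).card = j).card

/-- `β^r_i(F)`: the number of `r`-element subfamilies of `F` whose intersection has size `i`. -/
def betaCount (r n i : ℕ) (F : Finset (Finset (Fin n))) : ℕ :=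
  (F.powerset.filter fun G => G.card = r ∧ (G.inf id).card = i).card

/-- the complete multi-level poset `K_{r 0, …, r (s-1)}`: level `i` has `r i` elements,
and every element of level `i` is below every element of level `j` whenever `i < j`. -/
def KP {s : ℕ} (r : Fin s → ℕ) : Type := Σ i, Fin (r i)

namespace KP

variable {s : ℕ} {r : Fin s → ℕ}

def le (x y : KP r) : Prop := x = y ∨ x.1 < y.1

instance : PartialOrder (KP r) where
  le := KP.le
  le_refl x := Or.inl rfl
  le_trans x y z hxy hyz := by
    rcases hxy with rfl | h
    · exact hyz
    · rcases hyz with rfl | h'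
      · exact Or.inr h
      · exact Or.inr (h.trans h')
  le_antisymm x y hxy hyx := by
    rcases hxy with rfl | h
    · rfl
    · rcases hyx with rfl | h'
      · rfl
      · exact absurd (h.trans h') (lt_irrefl _)

instance : Fintype (KP r) := inferInstanceAs (Fintype (Σ i, Fin (r i)))

end KP

/-- the chain (totally ordered poset) with `k` elements. -/
abbrev PChain (k : ℕ) := Fin k

/-- `∨_r = K_{1,r}` -/
abbrev VeePoset (r : ℕ) := KP ![1, r]

/-- `∧_r = K_{r,1}` -/
abbrev WedgePoset (r : ℕ) := KP ![r, 1]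

/-- the generalized diamond `D_r = K_{1,r,1}` -/
abbrev DiamondPoset (r : ℕ) := KP ![1, r, 1]

/-- the butterfly poset `B = K_{2,2}` -/
abbrev Butterfly := KP ![2, 2]

/-- the height `l(Q)` of a finite poset: the number of elements of a longest chain. -/
def height (Q : Type) [PartialOrder Q] [Fintype Q] : ℕ :=
  ((Finset.univ : Finset (Finset Q)).filter fun C : Finset Q =>
    IsChain (· ≤ ·) (↑C : Set Q)).sup Finset.card


/-- `Q₁ ⊗_r Q₂`: disjoint copies of `Q₁` and `Q₂` with an `r`-element antichain in between;
everything in `Q₁` is below the middle elements and below everything in `Q₂`,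
and the middle elements are below everything in `Q₂`. -/
inductive Otimes (Q₁ Q₂ : Type) (r : ℕ) : Type
  | bot : Q₁ → Otimes Q₁ Q₂ r
  | mid : Fin r → Otimes Q₁ Q₂ r
  | top : Q₂ → Otimes Q₁ Q₂ r

namespace Otimes

variable {Q₁ Q₂ : Type} {r : ℕ}

def le [PartialOrder Q₁] [PartialOrder Q₂] : Otimes Q₁ Q₂ r → Otimes Q₁ Q₂ r → Prop
  | bot a, bot b => a ≤ b
  | bot _, mid _ => True
  | bot _, top _ => True
  | mid i, mid j => i = j
  | mid _, top _ => True
  | top a, top b => a ≤ b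
  | _, _ => False

instance [PartialOrder Q₁] [PartialOrder Q₂] : PartialOrder (Otimes Q₁ Q₂ r) where
  le := Otimes.le
  le_refl x := by cases x <;> simp [Otimes.le]
  le_trans x y z hxy hyz := by
    cases x <;> cases y <;> cases z <;> simp_all [Otimes.le] <;>
      first
        | exact le_trans hxy hyz
        | trivial
  le_antisymm x y hxy hyx := by
    cases x <;> cases y <;> simp_all [Otimes.le] <;>
      first
        | exact le_antisymm hxy hyx
        | rfl

instance [Fintype Q₁] [Fintype Q₂] : Fintype (Otimes Q₁ Q₂ r) :=
  Fintype.ofEquiv (Q₁ ⊕ Fin r ⊕ Q₂)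
    { toFun := fun x => match x with
        | Sum.inl a => bot a
        | Sum.inr (Sum.inl i) => mid i
        | Sum.inr (Sum.inr b) => top b
      invFun := fun x => match x with
        | bot a => Sum.inl a
        | mid i => Sum.inr (Sum.inl i)
        | top b => Sum.inr (Sum.inr b)
      left_inv := fun x => by rcases x with a | (i | b) <;> rfl
      right_inv := fun x => by cases x <;> rfl }

end Otimes

/-- `Q ⊕ r`: the poset obtained from `Q` by adding an antichain of `r` new elements,
each above every element of `Q`. -/
inductive Oplus (Q : Type) (r : ℕ) : Type
  | base : Q → Oplus Q r
  | new : Fin r → Oplus Q r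

namespace Oplus

variable {Q : Type} {r : ℕ}

def le [PartialOrder Q] : Oplus Q r → Oplus Q r → Prop
  | base a, base b => a ≤ b
  | base _, new _ => True
  | new i, new j => i = j
  | new _, base _ => False

instance [PartialOrder Q] : PartialOrder (Oplus Q r) where
  le := Oplus.le
  le_refl x := by cases x <;> simp [Oplus.le]
  le_trans x y z hxy hyz := by
    cases x <;> cases y <;> cases z <;> simp_all [Oplus.le] <;>
      first
        | exact le_trans hxy hyz
        | trivial
  le_antisymm x y hxy hyx := by
    cases x <;> cases y <;> simp_all [Oplus.le] <;>
      first
        | exact le_antisymm hxy hyx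
        | rfl

instance [Fintype Q] : Fintype (Oplus Q r) :=
  Fintype.ofEquiv (Q ⊕ Fin r)
    { toFun := fun x => match x with
        | Sum.inl a => base a
        | Sum.inr i => new i
      invFun := fun x => match x with
        | base a => Sum.inl a
        | new i => Sum.inr i
      left_inv := fun x => by rcases x with a | i <;> rfl
      right_inv := fun x => by cases x <;> rfl }

end Oplus

/-- the poset `N`: four elements `a, b, c, d` with `a ≤ c`, `b ≤ c`, `b ≤ d`
and no other nontrivial relations. -/
inductive NPoset : Type
  | a | b | c | d
  deriving DecidableEq

instance : Fintype NPoset :=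
  ⟨{NPoset.a, NPoset.b, NPoset.c, NPoset.d}, fun x => by cases x <;> simp⟩

namespace NPoset

def le : NPoset → NPoset → Prop := fun x y =>
  x = y ∨ (x = a ∧ y = c) ∨ (x = b ∧ y = c) ∨ (x = b ∧ y = d)

instance : DecidableRel le := fun x y => by unfold le; infer_instance

theorem le_refl' : ∀ x : NPoset, le x x := by decide
theorem le_trans' : ∀ x y z : NPoset, le x y → le y z → le x z := by decide
theorem le_antisymm' : ∀ x y : NPoset, le x y → le y x → x = y := by decide

instance : PartialOrder NPoset :=
  { le := le, le_refl := le_refl', le_trans := le_trans', le_antisymm := le_antisymm' }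

end NPoset

/-- the poset `B⁺`: five elements with `a < c`, `a < e`, `b < c`, `b < d`, `d < e`
(and the relation `b < e` forced by transitivity). -/
inductive BPlusPoset : Type
  | a | b | c | d | e
  deriving DecidableEq

instance : Fintype BPlusPoset :=
  ⟨{BPlusPoset.a, BPlusPoset.b, BPlusPoset.c, BPlusPoset.d, BPlusPoset.e}, fun x => by cases x <;> simp⟩

namespace BPlusPoset

def le : BPlusPoset → BPlusPoset → Prop := fun x y =>
  x = y ∨ (x = a ∧ y = c) ∨ (x = a ∧ y = e) ∨ (x = b ∧ y = c) ∨ (x = b ∧ y = d) ∨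
    (x = b ∧ y = e) ∨ (x = d ∧ y = e)

instance : DecidableRel le := fun x y => by unfold le; infer_instance

theorem le_refl' : ∀ x : BPlusPoset, le x x := by decide
theorem le_trans' : ∀ x y z : BPlusPoset, le x y → le y z → le x z := by decide
theorem le_antisymm' : ∀ x y : BPlusPoset, le x y → le y x → x = y := by decide

instance : PartialOrder BPlusPoset :=
  { le := le, le_refl := le_refl', le_trans := le_trans', le_antisymm := le_antisymm' }

end BPlusPoset

/-- the poset `B⁺⁺`: five elements with `a, b < c, d` and `d < e`
(hence also `a < e` and `b < e`). -/
inductive BPlusPlusPoset : Type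
  | a | b | c | d | e
  deriving DecidableEq

instance : Fintype BPlusPlusPoset :=
  ⟨{BPlusPlusPoset.a, BPlusPlusPoset.b, BPlusPlusPoset.c, BPlusPlusPoset.d, BPlusPlusPoset.e}, fun x => by cases x <;> simp⟩

namespace BPlusPlusPoset

def le : BPlusPlusPoset → BPlusPlusPoset → Prop := fun x y =>
  x = y ∨ (x = a ∧ y = c) ∨ (x = a ∧ y = d) ∨ (x = a ∧ y = e) ∨ (x = b ∧ y = c) ∨
    (x = b ∧ y = d) ∨ (x = b ∧ y = e) ∨ (x = d ∧ y = e)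

instance : DecidableRel le := fun x y => by unfold le; infer_instance

theorem le_refl' : ∀ x : BPlusPlusPoset, le x x := by decide
theorem le_trans' : ∀ x y z : BPlusPlusPoset, le x y → le y z → le x z := by decide
theorem le_antisymm' : ∀ x y : BPlusPlusPoset, le x y → le y x → x = y := by decide

instance : PartialOrder BPlusPlusPoset :=
  { le := le, le_refl := le_refl', le_trans := le_trans', le_antisymm := le_antisymm' }

end BPlusPlusPoset

/-- the binary entropy function `h(x) = -x log₂ x - (1-x) log₂ (1-x)`. -/
def binEnt (x : ℝ) : ℝ := -x * Real.logb 2 x - (1 - x) * Real.logb 2 (1 - x)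


/-!
In a `∨`-free family every member lies strictly below at most one other member. Hence the
non-maximal members form an antichain, of size at most `C(n, ⌊n/2⌋)` by Sperner's theorem, and a
copy of `∧_r` is determined by its `r` non-maximal members, its top being the unique member above
them. The middle level together with `[n]` attains the bound. Complementation exchanges copies of
`∨_r` and `∧_r`, which transfers everything to the second equality.
-/

open scoped FinsetFamily

section Copies

variable {n : ℕ}

theorem IsCopy.compls {α : Type} [PartialOrder α] [Fintype α] {G : Finset (Finset (Fin n))}
    (hG : IsCopy α G) : IsCopy αᵒᵈ Gᶜˢ := by
  obtain ⟨φ, hinj, rfl, hmono⟩ := hG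
  refine ⟨fun x => (φ (OrderDual.ofDual x))ᶜ, compl_injective.comp hinj, ?_,
    fun x y hxy => compl_subset_compl.2 (hmono _ _ hxy)⟩
  ext A
  simp only [mem_image, mem_univ, true_and, mem_compls]
  exact exists_congr fun x => compl_eq_comm.trans eq_comm

theorem isCopy_orderDual_compls_iff {α : Type} [PartialOrder α] [Fintype α]
    {G : Finset (Finset (Fin n))} : IsCopy αᵒᵈ Gᶜˢ ↔ IsCopy α G :=
  ⟨fun h => compls_compls G ▸ h.compls, IsCopy.compls⟩

theorem isCopy_iff_of_le_iff {α : Type} [PartialOrder α] [Fintype α] (t : α)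
    (hle : ∀ x y : α, x ≤ y ↔ x = y ∨ y = t) {G : Finset (Finset (Fin n))} :
    IsCopy α G ↔ #G = Fintype.card α ∧ ∃ T ∈ G, ∀ A ∈ G, A ⊆ T := by
  constructor
  · rintro ⟨φ, hinj, rfl, hmono⟩
    refine ⟨by rw [card_image_of_injective _ hinj, card_univ], φ t,
      mem_image_of_mem _ (mem_univ _), ?_⟩
    simp only [mem_image, mem_univ, true_and, forall_exists_index, forall_apply_eq_imp_iff]
    exact fun x => hmono x t ((hle x t).2 (Or.inr rfl))
  · rintro ⟨hcard, T, hT, hTmax⟩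
    obtain ⟨e⟩ : Nonempty (α ≃ G) := Fintype.card_eq.1 (by simp [hcard])
    set e' := e.trans (Equiv.swap (e t) ⟨T, hT⟩)
    have he' : e' t = ⟨T, hT⟩ := Equiv.swap_apply_left _ _
    refine ⟨fun x => e' x, Subtype.val_injective.comp e'.injective, ?_, fun x y hxy => ?_⟩
    · ext A
      simp only [mem_image, mem_univ, true_and]
      exact ⟨fun ⟨x, hx⟩ => hx ▸ (e' x).2, fun hA => ⟨e'.symm ⟨A, hA⟩, by simp⟩⟩
    · rcases (hle x y).1 hxy with rfl | rfl
      · exact subset_rfl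
      · simpa [he'] using hTmax _ (e' x).2

theorem KP.le_iff_of_two {a b : ℕ} (x y : KP ![a, b]) : x ≤ y ↔ x = y ∨ x.1 = 0 ∧ y.1 = 1 := by
  change x = y ∨ x.1 < y.1 ↔ _
  have fin_two_lt_iff : ∀ i j : Fin 2, i < j ↔ i = 0 ∧ j = 1 := by decide
  rw [fin_two_lt_iff]

def WedgePoset.top (r : ℕ) : WedgePoset r := ⟨1, (0 : Fin 1)⟩

theorem WedgePoset.eq_top_iff {r : ℕ} (x : WedgePoset r) : x = top r ↔ x.1 = 1 := by
  refine ⟨fun h => h ▸ rfl, fun h => ?_⟩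
  rcases x with ⟨i, j⟩
  obtain rfl : i = 1 := h
  obtain rfl : j = (0 : Fin 1) := Subsingleton.elim (α := Fin 1) _ _
  rfl

theorem WedgePoset.le_iff {r : ℕ} (x y : WedgePoset r) : x ≤ y ↔ x = y ∨ y = top r := by
  rw [KP.le_iff_of_two, eq_top_iff]
  by_cases hx : x.1 = 0
  · simp [hx]
  · rw [(eq_top_iff x).2 (Fin.eq_one_of_ne_zero _ hx), eq_comm, eq_top_iff]
    tauto

theorem card_wedgePoset (r : ℕ) : Fintype.card (WedgePoset r) = r + 1 := by
  show Fintype.card (Σ i, Fin (![r, 1] i)) = _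
  simp [Fintype.card_sigma]

def VeePoset.bot (r : ℕ) : VeePoset r := ⟨0, (0 : Fin 1)⟩

theorem VeePoset.eq_bot_iff {r : ℕ} (x : VeePoset r) : x = bot r ↔ x.1 = 0 := by
  refine ⟨fun h => h ▸ rfl, fun h => ?_⟩
  rcases x with ⟨i, j⟩
  obtain rfl : i = 0 := h
  obtain rfl : j = (0 : Fin 1) := Subsingleton.elim (α := Fin 1) _ _
  rfl

theorem VeePoset.le_iff {r : ℕ} (x y : VeePoset r) : x ≤ y ↔ x = y ∨ x = bot r := by
  rw [KP.le_iff_of_two, eq_bot_iff]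
  by_cases hy : y.1 = 1
  · simp [hy]
  · rw [(eq_bot_iff y).2 (by_contra fun h => hy (Fin.eq_one_of_ne_zero _ h)), eq_bot_iff]
    tauto

theorem card_veePoset (r : ℕ) : Fintype.card (VeePoset r) = r + 1 := by
  show Fintype.card (Σ i, Fin (![1, r] i)) = _
  simp [Fintype.card_sigma, add_comm]

theorem isCopy_wedge_iff {r : ℕ} {G : Finset (Finset (Fin n))} :
    IsCopy (WedgePoset r) G ↔ #G = r + 1 ∧ ∃ T ∈ G, ∀ A ∈ G, A ⊆ T := by
  rw [isCopy_iff_of_le_iff (WedgePoset.top r) WedgePoset.le_iff, card_wedgePoset]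

theorem isCopy_orderDual_vee_iff {r : ℕ} {G : Finset (Finset (Fin n))} :
    IsCopy (VeePoset r)ᵒᵈ G ↔ #G = r + 1 ∧ ∃ T ∈ G, ∀ A ∈ G, A ⊆ T := by
  have hle (x y : (VeePoset r)ᵒᵈ) : x ≤ y ↔ x = y ∨ y = OrderDual.toDual (VeePoset.bot r) :=
    (VeePoset.le_iff (OrderDual.ofDual y) (OrderDual.ofDual x)).trans (or_congr_left eq_comm)
  rw [isCopy_iff_of_le_iff _ hle, Fintype.card_orderDual, card_veePoset]

theorem isCopy_vee_iff_isCopy_wedge_compls {r : ℕ} {G : Finset (Finset (Fin n))} :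
    IsCopy (VeePoset r) G ↔ IsCopy (WedgePoset r) Gᶜˢ := by
  rw [← isCopy_orderDual_compls_iff, isCopy_orderDual_vee_iff, isCopy_wedge_iff]

theorem isCopy_vee_iff {r : ℕ} {G : Finset (Finset (Fin n))} :
    IsCopy (VeePoset r) G ↔ #G = r + 1 ∧ ∃ B ∈ G, ∀ A ∈ G, B ⊆ A := by
  simp_rw [isCopy_vee_iff_isCopy_wedge_compls, isCopy_wedge_iff, card_compls, exists_compls_iff,
    forall_mem_compls, compl_subset_compl]

end Copies

section Counting

variable {n : ℕ} {P Q : Type} [PartialOrder P] [Fintype P] [PartialOrder Q] [Fintype Q]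

theorem copyCount_eq_zero_iff {F : Finset (Finset (Fin n))} :
    copyCount P F = 0 ↔ ∀ G ⊆ F, ¬IsCopy P G := by
  simp [copyCount, filter_eq_empty_iff]

theorem copyCount_le_la {F : Finset (Finset (Fin n))} (hF : copyCount P F = 0) :
    copyCount Q F ≤ La n P Q :=
  le_sup (f := copyCount Q) (mem_filter.2 ⟨mem_univ F, hF⟩)

theorem la_le {m : ℕ} (h : ∀ F : Finset (Finset (Fin n)), copyCount P F = 0 → copyCount Q F ≤ m) :
    La n P Q ≤ m :=
  Finset.sup_le fun F hF => h F (mem_filter.1 hF).2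

theorem copyCount_wedge_compls (r : ℕ) (F : Finset (Finset (Fin n))) :
    copyCount (WedgePoset r) Fᶜˢ = copyCount (VeePoset r) F := by
  refine (card_nbij' compls compls (fun G hG => ?_) (fun G hG => ?_) (fun G _ => compls_compls G)
    (fun G _ => compls_compls G)).symm
  · simp_all [isCopy_vee_iff_isCopy_wedge_compls]
  · simp_all [isCopy_vee_iff_isCopy_wedge_compls, compls_subset_iff]

theorem copyCount_vee_compls (r : ℕ) (F : Finset (Finset (Fin n))) :
    copyCount (VeePoset r) Fᶜˢ = copyCount (WedgePoset r) F := by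
  rw [← copyCount_wedge_compls, compls_compls]

theorem la_wedge_vee_eq_la_vee_wedge (s r : ℕ) :
    La n (WedgePoset s) (VeePoset r) = La n (VeePoset s) (WedgePoset r) := by
  refine le_antisymm (la_le fun F hF => ?_) (la_le fun F hF => ?_)
  · rw [← copyCount_wedge_compls]
    exact copyCount_le_la (by rwa [copyCount_vee_compls])
  · rw [← copyCount_vee_compls]
    exact copyCount_le_la (by rwa [copyCount_wedge_compls])

end Counting

section UpperBound

variable {α : Type*} [DecidableEq α]

def nonMaximals (F : Finset (Finset α)) : Finset (Finset α) :=
  F.filter fun A => ∃ B ∈ F, A ⊂ B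

theorem nonMaximals_mono {F G : Finset (Finset α)} (h : G ⊆ F) :
    nonMaximals G ⊆ nonMaximals F :=
  fun A hA => by
    obtain ⟨hAG, B, hBG, hAB⟩ := mem_filter.1 hA
    exact mem_filter.2 ⟨h hAG, B, h hBG, hAB⟩

theorem nonMaximals_eq_erase {G : Finset (Finset α)} {T : Finset α} (hT : T ∈ G)
    (hTmax : ∀ A ∈ G, A ⊆ T) : nonMaximals G = G.erase T := by
  ext A
  simp only [nonMaximals, mem_filter, mem_erase]
  constructor
  · rintro ⟨hA, B, hB, hAB⟩
    exact ⟨fun hAT => hAB.not_subset (hAT ▸ hTmax B hB), hA⟩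
  · rintro ⟨hAT, hA⟩
    exact ⟨hA, T, hT, (hTmax A hA).ssubset_of_ne hAT⟩

variable {n : ℕ} {F : Finset (Finset (Fin n))}

theorem eq_of_ssubset_of_ssubset_of_vee_free (hF : copyCount (VeePoset 2) F = 0)
    {A B C : Finset (Fin n)} (hA : A ∈ F) (hB : B ∈ F) (hC : C ∈ F) (hAB : A ⊂ B) (hAC : A ⊂ C) :
    B = C := by
  by_contra hBC
  refine copyCount_eq_zero_iff.1 hF {A, B, C} (by simp [insert_subset_iff, *]) ?_
  refine isCopy_vee_iff.2 ⟨card_eq_three.2 ⟨A, B, C, hAB.ne, hAC.ne, hBC, rfl⟩, A, by simp, ?_⟩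
  simp [hAB.subset, hAC.subset]

theorem isAntichain_nonMaximals (hF : copyCount (VeePoset 2) F = 0) :
    IsAntichain (· ⊆ ·) (nonMaximals F : Set (Finset (Fin n))) := by
  intro A hA B hB hne hsub
  obtain ⟨hAF, -⟩ := mem_filter.1 hA
  obtain ⟨hBF, C, hCF, hBC⟩ := mem_filter.1 hB
  have hAB : A ⊂ B := hsub.ssubset_of_ne hne
  exact hBC.ne (eq_of_ssubset_of_ssubset_of_vee_free hF hAF hBF hCF hAB (hAB.trans hBC))

theorem copyCount_wedge_le_choose_card_nonMaximals {r : ℕ} (hr : 1 ≤ r)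
    (hF : copyCount (VeePoset 2) F = 0) :
    copyCount (WedgePoset r) F ≤ (#(nonMaximals F)).choose r := by
  rw [← card_powersetCard, copyCount]
  refine card_le_card_of_injOn nonMaximals (fun G hG => ?_) (fun G hG G' hG' hGG' => ?_)
  · simp only [coe_filter, mem_powerset, Set.mem_ofPred_eq] at hG
    obtain ⟨hGF, hG⟩ := hG
    obtain ⟨hcard, T, hT, hTmax⟩ := isCopy_wedge_iff.1 hG
    rw [mem_coe, mem_powersetCard, nonMaximals_eq_erase hT hTmax, card_erase_of_mem hT, hcard]
    exact ⟨nonMaximals_eq_erase hT hTmax ▸ nonMaximals_mono hGF, rfl⟩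
  · simp only [coe_filter, mem_powerset, Set.mem_ofPred_eq] at hG hG'
    obtain ⟨hcard, T, hT, hTmax⟩ := isCopy_wedge_iff.1 hG.2
    obtain ⟨-, T', hT', hTmax'⟩ := isCopy_wedge_iff.1 hG'.2
    rw [nonMaximals_eq_erase hT hTmax, nonMaximals_eq_erase hT' hTmax'] at hGG'
    obtain ⟨A, hA⟩ : (G.erase T).Nonempty := by
      rw [← card_pos, card_erase_of_mem hT, hcard]
      omega
    have hA' : A ∈ G'.erase T' := hGG' ▸ hA
    rw [mem_erase] at hA hA'
    obtain rfl : T = T' := eq_of_ssubset_of_ssubset_of_vee_free hF (hG.1 hA.2) (hG.1 hT)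
      (hG'.1 hT') ((hTmax A hA.2).ssubset_of_ne hA.1) ((hTmax' A hA'.2).ssubset_of_ne hA'.1)
    rw [← insert_erase hT, hGG', insert_erase hT']

theorem copyCount_wedge_le_of_vee_free {r : ℕ} (hr : 1 ≤ r) (hF : copyCount (VeePoset 2) F = 0) :
    copyCount (WedgePoset r) F ≤ (n.choose (n / 2)).choose r := by
  refine (copyCount_wedge_le_choose_card_nonMaximals hr hF).trans (Nat.choose_le_choose r ?_)
  simpa using (isAntichain_nonMaximals hF).sperner

end UpperBound

section LowerBound

variable {n : ℕ} {𝒜 : Finset (Finset (Fin n))}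

theorem copyCount_vee_insert_univ_eq_zero {r : ℕ} (hr : 2 ≤ r)
    (h𝒜 : IsAntichain (· ⊆ ·) (𝒜 : Set (Finset (Fin n)))) :
    copyCount (VeePoset r) (insert univ 𝒜) = 0 := by
  refine copyCount_eq_zero_iff.2 fun G hG hcopy => ?_
  obtain ⟨hcard, B, hB, hBmin⟩ := isCopy_vee_iff.1 hcopy
  have habove : G.erase B ⊆ {univ} := by
    intro X hX
    obtain ⟨hXB, hXG⟩ := mem_erase.1 hX
    rcases mem_insert.1 (hG hXG) with hXuniv | hX𝒜
    · exact mem_singleton.2 hXuniv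
    · rcases mem_insert.1 (hG hB) with rfl | hB𝒜
      · exact absurd (univ_subset_iff.1 (hBmin X hXG)) hXB
      · exact absurd (hBmin X hXG) (h𝒜 hB𝒜 hX𝒜 (Ne.symm hXB))
  have := card_le_card habove
  rw [card_erase_of_mem hB, hcard, card_singleton] at this
  omega

theorem choose_card_le_copyCount_wedge_insert_univ (r : ℕ) (h𝒜 : univ ∉ 𝒜) :
    (#𝒜).choose r ≤ copyCount (WedgePoset r) (insert univ 𝒜) := by
  rw [← card_powersetCard, copyCount]
  refine card_le_card_of_injOn (insert univ) (fun S hS => ?_) (fun S hS S' hS' hSS' => ?_)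
  · obtain ⟨hS𝒜, hcard⟩ := mem_powersetCard.1 hS
    have hSuniv : univ ∉ S := fun h => h𝒜 (hS𝒜 h)
    refine mem_filter.2 ⟨mem_powerset.2 (insert_subset_insert _ hS𝒜), isCopy_wedge_iff.2 ?_⟩
    exact ⟨by rw [card_insert_of_notMem hSuniv, hcard], univ, mem_insert_self _ _,
      fun A _ => subset_univ A⟩
  · have huniv (S) (hS : S ∈ (𝒜.powersetCard r : Set _)) : univ ∉ S :=
      fun h => h𝒜 ((mem_powersetCard.1 hS).1 h)
    rw [← erase_insert (huniv S hS), hSS', erase_insert (huniv S' hS')]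

end LowerBound

theorem statement3 (n r : ℕ) (hn : 1 ≤ n) (hr : 1 ≤ r) :
    La n (VeePoset 2) (WedgePoset r) = (n.choose (n / 2)).choose r ∧
    La n (WedgePoset 2) (VeePoset r) = (n.choose (n / 2)).choose r := by
  set middle := powersetCard (n / 2) (univ : Finset (Fin n))
  have huniv : univ ∉ middle := by
    simp [middle, mem_powersetCard, Nat.div_lt_self hn one_lt_two |>.ne']
  have hfree : copyCount (VeePoset 2) (insert univ middle) = 0 :=
    copyCount_vee_insert_univ_eq_zero le_rfl (Set.sized_powersetCard _ _).isAntichain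
  have hmiddle : #middle = n.choose (n / 2) := by simp [middle]
  have hLa : La n (VeePoset 2) (WedgePoset r) = (n.choose (n / 2)).choose r :=
    le_antisymm (la_le fun F hF => copyCount_wedge_le_of_vee_free hr hF)
      (hmiddle ▸ (choose_card_le_copyCount_wedge_insert_univ r huniv).trans (copyCount_le_la hfree))
  exact ⟨hLa, (la_wedge_vee_eq_la_vee_wedge 2 r).trans hLa⟩

end
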